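/- If A is a topological abelian group in the class ℰ, then the natural map A → A_∧ := lim_{n≥1} A/nA is injective; equivalently, the intersection ⋂_{n≥1} nA is trivial. (Claim 'If A is in the class ℰ, then A ↪ A_∧' of Section 3.) -/

import Mathlib

/-- The subgroup `nA = {n·a : a ∈ A}` of an abelian group `A`. -/
def nSub (A : Type*) [AddCommGroup A] (n : ℕ) : AddSubgroup A where
  carrier := Set.range fun a : A => n • a
  zero_mem' := ⟨0, smul_zero n⟩
  add_mem' := by rintro x y ⟨a, rfl⟩ ⟨b, rfl⟩; exact ⟨a + b, smul_add n a b⟩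
  neg_mem' := by rintro x ⟨a, rfl⟩; exact ⟨-a, smul_neg n a⟩

theorem nSub_le {A : Type*} [AddCommGroup A] {n m : ℕ} (h : n ∣ m) :
    nSub A m ≤ nSub A n := by
  rintro x ⟨a, rfl⟩
  obtain ⟨c, rfl⟩ := h
  exact ⟨c • a, (mul_smul n c a).symm⟩

/-- The natural projection `A/mA → A/nA` when `n ∣ m`. -/
def projMap {A : Type*} [AddCommGroup A] {n m : ℕ} (h : n ∣ m) :
    A ⧸ nSub A m →+ A ⧸ nSub A n :=
  QuotientAddGroup.map _ _ (AddMonoidHom.id A) fun _x hx => nSub_le h hx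

/-- The completion `A_∧ = lim_{n ≥ 1} A/nA`, the inverse limit over positive integers
ordered by divisibility, as the subgroup of compatible families. -/
def ComplA (A : Type*) [AddCommGroup A] :
    AddSubgroup (∀ n : ℕ+, A ⧸ nSub A (n : ℕ)) where
  carrier := {f | ∀ (n m : ℕ+) (h : (n : ℕ) ∣ (m : ℕ)), projMap h (f m) = f n}
  zero_mem' := fun _n _m _h => map_zero _
  add_mem' := by
    intro f g hf hg n m h
    simp only [Pi.add_apply, map_add, hf n m h, hg n m h]
  neg_mem' := by
    intro f hf n m h
    simp only [Pi.neg_apply, map_neg, hf n m h]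

/-- The natural map `A → A_∧` sending `a` to its family of residues. -/
def toCompl (A : Type*) [AddCommGroup A] : A →+ ↥(ComplA A) where
  toFun a := ⟨fun _n => QuotientAddGroup.mk a, fun _n _m _h => rfl⟩
  map_zero' := rfl
  map_add' _a _b := rfl

/-- A topological abelian group `A` belongs to the class ℰ if it admits a closed
subgroup `P` which is profinite (compact, Hausdorff and totally disconnected) such
that the quotient `A ⧸ P`, with the quotient topology, is discrete and finitely
generated. -/
def IsClassE (A : Type*) [AddCommGroup A] [TopologicalSpace A] : Prop :=
  ∃ P : AddSubgroup A, IsClosed (P : Set A) ∧ CompactSpace P ∧ T2Space P ∧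
    TotallyDisconnectedSpace P ∧ DiscreteTopology (A ⧸ P) ∧ AddGroup.FG (A ⧸ P)

/-! Every group in ℰ is residually finite. Finitely generated abelian groups are (by the structure
theorem they embed in `ℤⁿ × T` with `T` finite), profinite groups are (open subgroups separate
points), and an abelian extension `0 → K → G → G/K → 0` with `K` residually finite and `G/K`
finitely generated is again residually finite: for a finite-index subgroup `U` of `K`, the group
`G/U` is finite-by-finitely-generated, hence finitely generated, hence residually finite.
Finally, a finite-index subgroup `H` of an abelian group `A` contains `(index H) • A`, so in a
residually finite `A` the intersection `⋂ nA` is trivial. -/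

open AddGroup DirectSum

namespace AddGroup.ResiduallyFinite

theorem of_injective {G H : Type*} [AddGroup G] [AddGroup H] [ResiduallyFinite H] (f : G →+ H)
    (hf : Function.Injective f) : ResiduallyFinite G := by
  refine residuallyFinite_iff_forall_finiteIndexNormalAddSubgroup.mpr fun g hg ↦ hf ?_
  rw [map_zero]
  exact residuallyFinite_iff_forall_finiteIndexNormalAddSubgroup.mp ‹_› (f g) fun K ↦ hg (K.comap f)

instance pi {ι : Type*} {B : ι → Type*} [∀ i, AddGroup (B i)] [∀ i, ResiduallyFinite (B i)] :
    ResiduallyFinite (∀ i, B i) := by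
  rw [residuallyFinite_iff_forall_finiteIndexNormalAddSubgroup]
  intro g hg
  funext i
  exact residuallyFinite_iff_forall_finiteIndexNormalAddSubgroup.mp inferInstance (g i)
    fun K ↦ hg (K.comap (Pi.evalAddMonoidHom B i))

instance int : ResiduallyFinite ℤ := by
  refine residuallyFinite_of_forall_exists_finite_addMonoidHom fun g hg ↦
    ⟨ZMod (g.natAbs + 1), inferInstance, inferInstance, Int.castAddHom _, fun hg0 ↦ hg ?_⟩
  rw [Int.coe_castAddHom, ZMod.intCast_zmod_eq_zero_iff_dvd] at hg0
  exact Int.eq_zero_of_dvd_of_natAbs_lt_natAbs hg0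
    (by rw [Int.natAbs_natCast]; exact Nat.lt_succ_self _)

instance of_compactSpace_of_totallyDisconnectedSpace (G : Type*) [AddGroup G]
    [TopologicalSpace G] [IsTopologicalAddGroup G] [CompactSpace G] [TotallyDisconnectedSpace G] :
    ResiduallyFinite G := by
  refine residuallyFinite_iff_exists_finiteIndex.mpr fun g hg ↦ ?_
  obtain ⟨H, hH⟩ := ProfiniteGrp.exist_openNormalAddSubgroup_sub_open_nhds_of_zero
    isOpen_compl_singleton (Ne.symm hg)
  have : Finite (G ⧸ H.toAddSubgroup) := AddSubgroup.quotient_finite_of_isOpen _ H.isOpen'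
  exact ⟨H.toAddSubgroup, AddSubgroup.finiteIndex_of_finite_quotient, fun hgH ↦ hH hgH rfl⟩

end AddGroup.ResiduallyFinite

instance AddCommGroup.residuallyFinite_of_fg (G : Type*) [AddCommGroup G] [AddGroup.FG G] :
    ResiduallyFinite G := by
  obtain ⟨n, ι, _, p, hp, e, ⟨f⟩⟩ := AddCommGroup.equiv_free_prod_directSum_zmod G
  have : ∀ i, NeZero (p i ^ e i) := fun i ↦ ⟨pow_ne_zero _ (hp i).ne_zero⟩
  have : Finite (⨁ i, ZMod (p i ^ e i)) := Finite.of_equiv _ DFinsupp.equivFunOnFintype.symm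
  let toPi : (Fin n →₀ ℤ) × (⨁ i, ZMod (p i ^ e i)) →+ (Fin n → ℤ) × ⨁ i, ZMod (p i ^ e i) :=
    Finsupp.coeFnAddHom.prodMap (AddMonoidHom.id _)
  refine ResiduallyFinite.of_injective (toPi.comp f.toAddMonoidHom) ?_
  exact (Prod.map_injective.mpr ⟨DFunLike.coe_injective, Function.injective_id⟩).comp f.injective

theorem AddSubgroup.fg_quotient_map_subtype {G : Type*} [AddCommGroup G] (K : AddSubgroup G)
    [AddGroup.FG (G ⧸ K)] (U : AddSubgroup K) [U.FiniteIndex] :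
    AddGroup.FG (G ⧸ U.map K.subtype) := by
  set V := U.map K.subtype
  have hVK : V ≤ K := AddSubgroup.map_subtype_le U
  let f : K ⧸ U →+ G ⧸ V := QuotientAddGroup.map U V K.subtype (AddSubgroup.le_comap_map _ _)
  let g : G ⧸ V →+ G ⧸ K := QuotientAddGroup.map V K (AddMonoidHom.id G) hVK
  have hexact : Function.Exact f g := by
    intro y
    induction y using QuotientAddGroup.induction_on with | H x => ?_
    rw [Set.mem_range]
    refine ⟨fun hx ↦ ⟨(⟨x, (QuotientAddGroup.eq_zero_iff x).mp hx⟩ : K), rfl⟩, ?_⟩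
    rintro ⟨z, hz⟩
    induction z using QuotientAddGroup.induction_on with | H k => ?_
    have hkx : -(k : G) + x ∈ K := hVK (QuotientAddGroup.eq.mp hz)
    exact (QuotientAddGroup.eq_zero_iff x).mpr (by simpa using K.add_mem k.2 hkx)
  have : Module.Finite ℤ (G ⧸ K) := Module.Finite.iff_addGroup_fg.mpr inferInstance
  have := Module.Finite.of_exact (f := f.toIntLinearMap) (g := g.toIntLinearMap) hexact
    (QuotientAddGroup.map_surjective_of_surjective _ _ _ QuotientAddGroup.mk_surjective hVK)
  exact Module.Finite.iff_addGroup_fg.mp this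

theorem AddCommGroup.residuallyFinite_of_fg_quotient {G : Type*} [AddCommGroup G]
    (K : AddSubgroup G) [ResiduallyFinite K] [AddGroup.FG (G ⧸ K)] : ResiduallyFinite G := by
  refine residuallyFinite_iff_exists_finiteIndex.mpr fun a ha ↦ ?_
  obtain ⟨U, hU, haU⟩ : ∃ U : AddSubgroup K, U.FiniteIndex ∧ a ∉ U.map K.subtype := by
    by_cases haK : a ∈ K
    · obtain ⟨U, hU, haU⟩ := residuallyFinite_iff_exists_finiteIndex.mp inferInstance
        (⟨a, haK⟩ : K) (by simpa using ha)
      exact ⟨U, hU, by simpa [haK] using haU⟩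
    · exact ⟨⊤, inferInstance, by simpa using haK⟩
  have := K.fg_quotient_map_subtype U
  obtain ⟨H, hH, haH⟩ := residuallyFinite_iff_exists_finiteIndex.mp inferInstance
    (a : G ⧸ U.map K.subtype) (by simpa using haU)
  refine ⟨H.comap (QuotientAddGroup.mk' _), ⟨?_⟩, haH⟩
  rw [AddSubgroup.index_comap_of_surjective _ (QuotientAddGroup.mk'_surjective _)]
  exact hH.index_ne_zero

theorem toCompl_injective_of_residuallyFinite (A : Type*) [AddCommGroup A] [ResiduallyFinite A] :
    Function.Injective (toCompl A) := by
  refine (injective_iff_map_eq_zero _).mpr fun a ha ↦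
    residuallyFinite_iff_forall_finiteIndex.mp inferInstance a fun H _ ↦ ?_
  have hpos : 0 < H.index := Nat.pos_of_ne_zero AddSubgroup.FiniteIndex.index_ne_zero
  obtain ⟨x, rfl⟩ : a ∈ nSub A H.index :=
    (QuotientAddGroup.eq_zero_iff a).mp (congrFun (congrArg Subtype.val ha) ⟨H.index, hpos⟩)
  exact H.nsmul_index_mem x

theorem IsClassE.residuallyFinite {A : Type*} [AddCommGroup A] [TopologicalSpace A]
    [IsTopologicalAddGroup A] (hA : IsClassE A) : ResiduallyFinite A := by
  obtain ⟨P, -, _, -, _, -, _⟩ := hA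
  exact AddCommGroup.residuallyFinite_of_fg_quotient P

/-- If `A` is a topological abelian group in the class ℰ, then the natural map
`A → A_∧ = lim_{n ≥ 1} A/nA` is injective. -/
theorem statement_7 (A : Type*) [AddCommGroup A] [TopologicalSpace A]
    [IsTopologicalAddGroup A] (hA : IsClassE A) :
    Function.Injective ⇑(toCompl A) := by
  have := hA.residuallyFinite
  exact toCompl_injective_of_residuallyFinite A
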